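/- Let T ∈ 𝕋 be a caterpillar, not a star, with n pendant vertices and non-pendant vertices v_1, ..., v_k forming a path (v_i adjacent to v_{i+1}), where v_i is adjacent to t_i pendant vertices. Then the number of edges of the group inverse graph T# equals n + t_1 t_2 + t_2 t_3 + ⋯ + t_{k−1} t_k. -/

import Mathlib

/-!
The spine vertices `v₁, …, v_k` cover every edge of `T` (two pendant vertices are never adjacent),
and choosing one pendant neighbour `pᵢ` of each `vᵢ` gives a matching `{vᵢpᵢ}` with `k` edges.
Hence the maximum matchings have exactly `k` edges, each joining some `vᵢ` to a pendant
neighbour. A pendant vertex can only be an end of a path, so a path alternating for a maximum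
matching contains at most two matching edges: it is a single pendant edge `p vᵢ`, or
`p – vᵢ – vⱼ – q` with `p`, `q` pendant and `|i − j| = 1`. Conversely, each such path alternates
for a suitable choice of the `pᵢ`. So the edges of `T#` are the `n` pendant edges of `T` together
with, for each `i`, the `tᵢ tᵢ₊₁` pairs of a pendant neighbour of `vᵢ` and one of `vᵢ₊₁`.
-/

open SimpleGraph

/-- `X` is the group inverse of `A`. -/
def IsGroupInverse {n : Type*} [Fintype n] (A X : Matrix n n ℝ) : Prop :=
  A * X * A = A ∧ X * A * X = X ∧ A * X = X * A

/-- A matching of a graph: a set of pairwise non-incident edges. -/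
def IsMatching {V : Type*} (G : SimpleGraph V) (M : Finset (Sym2 V)) : Prop :=
  (↑M : Set (Sym2 V)) ⊆ G.edgeSet ∧
    ∀ e ∈ M, ∀ f ∈ M, e ≠ f → ∀ v : V, ¬(v ∈ e ∧ v ∈ f)

/-- A maximum matching: a matching of maximum cardinality. -/
def IsMaxMatching {V : Type*} (G : SimpleGraph V) (M : Finset (Sym2 V)) : Prop :=
  IsMatching G M ∧ ∀ N : Finset (Sym2 V), IsMatching G N → N.card ≤ M.card

/-- A nonempty list of edges alternately in and out of `M`,
beginning and ending with edges of `M`. -/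
def IsAltEdgeList {V : Type*} (M : Set (Sym2 V)) : List (Sym2 V) → Prop
  | [] => False
  | [e] => e ∈ M
  | e :: f :: rest => e ∈ M ∧ f ∉ M ∧ IsAltEdgeList M rest

/-- A pair of vertices is maximally matchable if they are joined by a path that is
alternating with respect to some maximum matching. -/
def MaxMatchable {V : Type*} (G : SimpleGraph V) (u v : V) : Prop :=
  ∃ (p : G.Walk u v) (M : Finset (Sym2 V)),
    p.IsPath ∧ IsMaxMatching G M ∧ IsAltEdgeList (↑M) p.edges

/-- `G` is a star: some center `c` is adjacent to exactly the other vertices,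
and there are no other edges. -/
def IsStar {V : Type*} (G : SimpleGraph V) : Prop :=
  ∃ c : V, ∀ u v : V, G.Adj u v ↔ ((u = c ∧ v ≠ c) ∨ (v = c ∧ u ≠ c))

/-- The class 𝕋: trees with at least one non-pendant vertex in which every
non-pendant vertex is adjacent to a pendant vertex. -/
def InClassT {V : Type*} [Fintype V] (T : SimpleGraph V) [DecidableRel T.Adj] : Prop :=
  T.IsTree ∧ (∃ v, T.degree v ≠ 1) ∧
    ∀ v, T.degree v ≠ 1 → ∃ u, T.Adj v u ∧ T.degree u = 1

/-- The number of pendant neighbours of `v`. -/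
def pendantNbrs {V : Type*} [Fintype V] [DecidableEq V] (T : SimpleGraph V)
    [DecidableRel T.Adj] (v : V) : ℕ :=
  ((T.neighborFinset v).filter fun u => T.degree u = 1).card

open Finset

section General

variable {V : Type*} {G : SimpleGraph V}

theorem SimpleGraph.eq_of_adj_of_degree_eq_one {a x y : V} [Fintype (G.neighborSet a)]
    (ha : G.degree a = 1) (hx : G.Adj a x) (hy : G.Adj a y) : x = y :=
  (degree_eq_one_iff_existsUnique_adj.mp ha).unique hx hy

theorem SimpleGraph.Preconnected.eq_or_eq_of_degree_eq_one (hG : G.Preconnected) {a b : V}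
    [Fintype (G.neighborSet a)] [Fintype (G.neighborSet b)]
    (ha : G.degree a = 1) (hb : G.degree b = 1) (hab : G.Adj a b) (w : V) : w = a ∨ w = b := by
  induction (reachable_iff_reflTransGen a w).mp (hG a w) with
  | refl => exact .inl rfl
  | tail _ hxy ih =>
    rcases ih with rfl | rfl
    · exact .inr (eq_of_adj_of_degree_eq_one ha hxy hab)
    · exact .inl (eq_of_adj_of_degree_eq_one hb hxy hab.symm)

theorem SimpleGraph.Walk.IsPath.degree_ne_one_of_cons_cons {u x y w : V}
    [Fintype (G.neighborSet x)] {h : G.Adj u x} {h' : G.Adj x y} {q : G.Walk y w}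
    (hp : (cons h (cons h' q)).IsPath) : G.degree x ≠ 1 := fun hx => by
  have huy : u ≠ y := by
    rintro rfl
    exact ((cons_isPath_iff _ _).mp hp).2 (by simp)
  exact huy (eq_of_adj_of_degree_eq_one hx h.symm h')

theorem SimpleGraph.edgeSet_fromRel_eq {r : V → V → Prop} {E : Set (Sym2 V)}
    (hrE : ∀ a b, r a b → s(a, b) ∈ E) (hEr : ∀ e ∈ E, ∃ a b, a ≠ b ∧ r a b ∧ s(a, b) = e) :
    (fromRel r).edgeSet = E := by
  ext e
  induction e using Sym2.ind with
  | _ a b =>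
    rw [mem_edgeSet, fromRel_adj]
    constructor
    · rintro ⟨-, h | h⟩
      · exact hrE a b h
      · exact Sym2.eq_swap ▸ hrE b a h
    · intro he
      obtain ⟨x, y, hxy, hr, hxy_eq⟩ := hEr _ he
      rcases Sym2.eq_iff.mp hxy_eq with ⟨rfl, rfl⟩ | ⟨rfl, rfl⟩
      · exact ⟨hxy, .inl hr⟩
      · exact ⟨hxy.symm, .inr hr⟩

theorem Sym2.card_image_product_of_disjoint {α : Type*} [DecidableEq α] {s t : Finset α}
    (h : Disjoint s t) : #((s ×ˢ t).image Sym2.mk.uncurry) = #s * #t := by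
  rw [card_image_of_injOn, card_product]
  rintro ⟨a, b⟩ hab ⟨c, d⟩ hcd heq
  simp only [coe_product, Set.mem_prod, mem_coe, Function.uncurry_apply_pair] at hab hcd heq
  rcases Sym2.eq_iff.mp heq with ⟨rfl, rfl⟩ | ⟨rfl, rfl⟩
  · rfl
  · exact (disjoint_left.mp h hab.1 hcd.2).elim

theorem IsAltEdgeList.head_mem {M : Set (Sym2 V)} {e : Sym2 V} {l : List (Sym2 V)}
    (h : IsAltEdgeList M (e :: l)) : e ∈ M := by
  cases l with
  | nil => exact h
  | cons _ _ => exact h.1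

/-- A vertex of degree one can only be an end of a path, so when every edge of `M` has such an
end, an `M`-alternating path contains at most two edges of `M`. -/
theorem isAltEdgeList_edges_cases [Fintype V] [DecidableRel G.Adj] {M : Set (Sym2 V)}
    (hM : ∀ e ∈ M, ∃ x ∈ e, G.degree x = 1) {a b : V} (p : G.Walk a b) (hp : p.IsPath)
    (halt : IsAltEdgeList M p.edges) :
    (G.Adj a b ∧ (G.degree a = 1 ∨ G.degree b = 1)) ∨
      (G.degree a = 1 ∧ G.degree b = 1 ∧ ∃ x y, G.Adj a x ∧ G.Adj x y ∧ G.Adj y b) := by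
  have degree_eq_one_of_mem {x y : V} (h : s(x, y) ∈ M) : G.degree x = 1 ∨ G.degree y = 1 := by
    obtain ⟨z, hz, hdeg⟩ := hM _ h
    rcases Sym2.mem_iff.mp hz with rfl | rfl
    exacts [.inl hdeg, .inr hdeg]
  match p, hp, halt with
  | .nil, _, halt => exact halt.elim
  | .cons h .nil, _, halt => exact .inl ⟨h, degree_eq_one_of_mem halt⟩
  | .cons _ (.cons _ .nil), _, halt => exact halt.2.2.elim
  | .cons h₁ (.cons h₂ (.cons h₃ q)), hp, halt =>
    have ha := (degree_eq_one_of_mem halt.1).resolve_right hp.degree_ne_one_of_cons_cons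
    have hz := (degree_eq_one_of_mem halt.2.2.head_mem).resolve_left
      hp.of_cons.degree_ne_one_of_cons_cons
    cases q with
    | nil => exact .inr ⟨ha, hz, _, _, h₁, h₂, h₃⟩
    | cons _ _ => exact (hp.of_cons.of_cons.degree_ne_one_of_cons_cons hz).elim

theorem IsMatching.mono {M N : Finset (Sym2 V)} (hM : IsMatching G M) (hNM : N ⊆ M) :
    IsMatching G N :=
  ⟨(coe_subset.mpr hNM).trans hM.1, fun e he f hf => hM.2 e (hNM he) f (hNM hf)⟩

theorem IsMatching.card_le_of_forall_exists_mem {M : Finset (Sym2 V)} {C : Finset V}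
    (hM : IsMatching G M) (hC : ∀ e ∈ M, ∃ x ∈ C, x ∈ e) : #M ≤ #C :=
  card_le_card_of_forall_subsingleton (fun e x => x ∈ e) hC fun x _ e he f hf =>
    by_contra fun hne => hM.2 e he.1 f hf.1 hne x ⟨he.2, hf.2⟩

/-- Removing an edge with both ends in `C`, and those ends, would leave a matching of size
`#M - 1` covered by `#C - 2` vertices. -/
theorem IsMatching.eq_of_mk_mem_of_card_le [DecidableEq V] {M : Finset (Sym2 V)} {C : Finset V}
    (hM : IsMatching G M) (hC : ∀ e ∈ M, ∃ x ∈ C, x ∈ e) (hcard : #C ≤ #M) {x y : V}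
    (hxy : s(x, y) ∈ M) (hx : x ∈ C) (hy : y ∈ C) : x = y := by
  by_contra hne
  have hcover : ∀ e ∈ M.erase s(x, y), ∃ z ∈ (C.erase x).erase y, z ∈ e := by
    intro e he
    obtain ⟨hne', heM⟩ := mem_erase.mp he
    obtain ⟨z, hzC, hze⟩ := hC e heM
    have hz : z ∉ s(x, y) := fun hz => hM.2 _ hxy e heM (Ne.symm hne') z ⟨hz, hze⟩
    refine ⟨z, mem_erase.mpr ⟨?_, mem_erase.mpr ⟨?_, hzC⟩⟩, hze⟩
    · rintro rfl; exact hz (Sym2.mem_mk_right x z)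
    · rintro rfl; exact hz (Sym2.mem_mk_left z y)
  have hle := (hM.mono (erase_subset _ _)).card_le_of_forall_exists_mem hcover
  have hyx : y ∈ C.erase x := mem_erase.mpr ⟨Ne.symm hne, hy⟩
  have hpos : 0 < #(C.erase y) := card_pos.mpr ⟨x, mem_erase.mpr ⟨hne, hx⟩⟩
  rw [card_erase_of_mem hxy, card_erase_of_mem hyx, card_erase_of_mem hx] at hle
  rw [card_erase_of_mem hy] at hpos
  have hMpos := card_pos.mpr ⟨_, hxy⟩
  omega

theorem MaxMatchable.ne {a b : V} (h : MaxMatchable G a b) : a ≠ b := by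
  rintro rfl
  obtain ⟨p, M, hp, -, halt⟩ := h
  rw [(Walk.isPath_iff_nil.mp hp).eq_nil] at halt
  exact halt

end General

section Caterpillar

variable {V : Type*} [Fintype V] {T : SimpleGraph V} [DecidableRel T.Adj]

def pendantNbrFinset (T : SimpleGraph V) [DecidableRel T.Adj] (x : V) : Finset V :=
  {u ∈ T.neighborFinset x | T.degree u = 1}

theorem mem_pendantNbrFinset {x u : V} :
    u ∈ pendantNbrFinset T x ↔ T.Adj x u ∧ T.degree u = 1 := by
  simp [pendantNbrFinset]

theorem InClassT.not_adj_of_degree_eq_one (hT : InClassT T) {a b : V}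
    (ha : T.degree a = 1) (hb : T.degree b = 1) : ¬T.Adj a b := fun hab => by
  obtain ⟨w, hw⟩ := hT.2.1
  rcases hT.1.connected.preconnected.eq_or_eq_of_degree_eq_one ha hb hab w with rfl | rfl
  exacts [hw ha, hw hb]

variable {k : ℕ} {v : Fin k → V}

theorem degree_ne_one_of_spine (hrange : ∀ u, T.degree u ≠ 1 ↔ ∃ i, v i = u) (i : Fin k) :
    T.degree (v i) ≠ 1 :=
  (hrange (v i)).mpr ⟨i, rfl⟩

theorem eq_of_mem_pendantNbrFinset (hinj : Function.Injective v) {p : V} {i j : Fin k}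
    (hi : p ∈ pendantNbrFinset T (v i)) (hj : p ∈ pendantNbrFinset T (v j)) : i = j := by
  rw [mem_pendantNbrFinset] at hi hj
  exact hinj (eq_of_adj_of_degree_eq_one hi.2 hi.1.symm hj.1.symm)

theorem disjoint_pendantNbrFinset (hinj : Function.Injective v) {i j : Fin k} (hij : i ≠ j) :
    Disjoint (pendantNbrFinset T (v i)) (pendantNbrFinset T (v j)) :=
  disjoint_left.mpr fun _ hi hj => hij (eq_of_mem_pendantNbrFinset hinj hi hj)

def IsPendantSelection (T : SimpleGraph V) [DecidableRel T.Adj] (v f : Fin k → V) : Prop :=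
  ∀ i, f i ∈ pendantNbrFinset T (v i)

theorem exists_isPendantSelection_extending (hT : InClassT T)
    (hrange : ∀ u, T.degree u ≠ 1 ↔ ∃ i, v i = u) (s : Finset (Fin k)) (g : Fin k → V)
    (hg : ∀ i ∈ s, g i ∈ pendantNbrFinset T (v i)) :
    ∃ f, IsPendantSelection T v f ∧ ∀ i ∈ s, f i = g i := by
  have h : ∀ i, ∃ p ∈ pendantNbrFinset T (v i), i ∈ s → p = g i := by
    intro i
    by_cases hi : i ∈ s
    · exact ⟨g i, hg i hi, fun _ => rfl⟩
    · obtain ⟨p, hadj, hp⟩ := hT.2.2 (v i) (degree_ne_one_of_spine hrange i)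
      exact ⟨p, mem_pendantNbrFinset.mpr ⟨hadj, hp⟩, fun h => (hi h).elim⟩
  choose f hf hfg using h
  exact ⟨f, hf, hfg⟩

theorem IsPendantSelection.eq_of_mem_of_mem (hinj : Function.Injective v)
    (hrange : ∀ u, T.degree u ≠ 1 ↔ ∃ i, v i = u) {f : Fin k → V}
    (hf : IsPendantSelection T v f) {i j : Fin k} {x : V} (hi : x ∈ s(v i, f i))
    (hj : x ∈ s(v j, f j)) : i = j := by
  have hfi := (mem_pendantNbrFinset.mp (hf i)).2
  have hfj := (mem_pendantNbrFinset.mp (hf j)).2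
  rcases Sym2.mem_iff.mp hi with rfl | rfl <;> rcases Sym2.mem_iff.mp hj with h | h
  · exact hinj h
  · exact (degree_ne_one_of_spine hrange i (h ▸ hfj)).elim
  · exact (degree_ne_one_of_spine hrange j (h ▸ hfi)).elim
  · exact eq_of_mem_pendantNbrFinset hinj (hf i) (h ▸ hf j)

variable [DecidableEq V]

theorem exists_spine_mem_of_mem_edgeSet (hT : InClassT T)
    (hrange : ∀ u, T.degree u ≠ 1 ↔ ∃ i, v i = u) {e : Sym2 V} (he : e ∈ T.edgeSet) :
    ∃ x ∈ univ.image v, x ∈ e := by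
  induction e using Sym2.ind with
  | _ a b =>
    by_cases ha : T.degree a = 1
    · obtain ⟨i, rfl⟩ := (hrange b).mp fun hb => hT.not_adj_of_degree_eq_one ha hb he
      exact ⟨v i, mem_image_of_mem v (mem_univ i), Sym2.mem_mk_right _ _⟩
    · obtain ⟨i, rfl⟩ := (hrange a).mp ha
      exact ⟨v i, mem_image_of_mem v (mem_univ i), Sym2.mem_mk_left _ _⟩

theorem card_le_of_isMatching (hT : InClassT T) (hrange : ∀ u, T.degree u ≠ 1 ↔ ∃ i, v i = u)
    {M : Finset (Sym2 V)} (hM : IsMatching T M) : #M ≤ k :=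
  (hM.card_le_of_forall_exists_mem fun _ he => exists_spine_mem_of_mem_edgeSet hT hrange
    (hM.1 he)).trans (card_image_le.trans (by simp))

def matchingOfSelection (v f : Fin k → V) : Finset (Sym2 V) :=
  univ.image fun i => s(v i, f i)

theorem IsPendantSelection.isMatching (hinj : Function.Injective v)
    (hrange : ∀ u, T.degree u ≠ 1 ↔ ∃ i, v i = u) {f : Fin k → V}
    (hf : IsPendantSelection T v f) : IsMatching T (matchingOfSelection v f) := by
  constructor
  · intro e he
    obtain ⟨i, -, rfl⟩ := mem_image.mp he
    exact (mem_pendantNbrFinset.mp (hf i)).1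
  · intro e he e' he' hne x ⟨hxe, hxe'⟩
    obtain ⟨i, -, rfl⟩ := mem_image.mp he
    obtain ⟨j, -, rfl⟩ := mem_image.mp he'
    exact hne (by rw [hf.eq_of_mem_of_mem hinj hrange hxe hxe'])

theorem IsPendantSelection.card_matchingOfSelection (hinj : Function.Injective v)
    (hrange : ∀ u, T.degree u ≠ 1 ↔ ∃ i, v i = u) {f : Fin k → V}
    (hf : IsPendantSelection T v f) : #(matchingOfSelection v f) = k := by
  rw [matchingOfSelection, card_image_of_injective, card_univ, Fintype.card_fin]
  intro i j hij
  exact hf.eq_of_mem_of_mem hinj hrange (Sym2.mem_mk_left _ _)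
    ((congrArg (v i ∈ ·) hij).mp (Sym2.mem_mk_left _ _))

theorem IsPendantSelection.isMaxMatching (hT : InClassT T) (hinj : Function.Injective v)
    (hrange : ∀ u, T.degree u ≠ 1 ↔ ∃ i, v i = u) {f : Fin k → V}
    (hf : IsPendantSelection T v f) : IsMaxMatching T (matchingOfSelection v f) :=
  ⟨hf.isMatching hinj hrange, fun _ hN =>
    (hf.card_matchingOfSelection hinj hrange).symm ▸ card_le_of_isMatching hT hrange hN⟩

/-- The spine is a vertex cover with `k` vertices and some matching has `k` edges, so no edge
of a maximum matching joins two spine vertices. -/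
theorem IsMaxMatching.exists_degree_eq_one_mem (hT : InClassT T) (hinj : Function.Injective v)
    (hrange : ∀ u, T.degree u ≠ 1 ↔ ∃ i, v i = u) {M : Finset (Sym2 V)}
    (hM : IsMaxMatching T M) {e : Sym2 V} (he : e ∈ M) : ∃ x ∈ e, T.degree x = 1 := by
  induction e using Sym2.ind with
  | _ a b =>
    by_contra! h
    obtain ⟨i, rfl⟩ := (hrange a).mp (h a (Sym2.mem_mk_left a b))
    obtain ⟨j, rfl⟩ := (hrange b).mp (h b (Sym2.mem_mk_right _ b))
    obtain ⟨f, hf, -⟩ := exists_isPendantSelection_extending hT hrange ∅ v (by simp)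
    have hcard : #(univ.image v) ≤ #M := by
      rw [card_image_of_injective _ hinj, card_univ, Fintype.card_fin,
        ← hf.card_matchingOfSelection hinj hrange]
      exact hM.2 _ (hf.isMatching hinj hrange)
    exact T.ne_of_adj (hM.1.1 he) (hM.1.eq_of_mk_mem_of_card_le
      (fun _ he => exists_spine_mem_of_mem_edgeSet hT hrange (hM.1.1 he)) hcard he
      (mem_image_of_mem v (mem_univ i)) (mem_image_of_mem v (mem_univ j)))

def pendantEdges (T : SimpleGraph V) [DecidableRel T.Adj] : Finset (Sym2 V) :=
  ({x | T.degree x = 1} : Finset V).biUnion fun x => T.incidenceFinset x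

theorem mem_pendantEdges {e : Sym2 V} :
    e ∈ pendantEdges T ↔ e ∈ T.edgeSet ∧ ∃ x ∈ e, T.degree x = 1 := by
  simp only [pendantEdges, mem_biUnion, mem_filter, mem_univ, true_and, mem_incidenceFinset,
    incidenceSet, Set.mem_ofPred_eq]
  exact ⟨fun ⟨x, hx, he, hxe⟩ => ⟨he, x, hxe, hx⟩, fun ⟨he, x, hxe, hx⟩ => ⟨x, hx, he, hxe⟩⟩

def crossEdges (T : SimpleGraph V) [DecidableRel T.Adj] (v : Fin k → V) (i : Fin k) :
    Finset (Sym2 V) :=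
  if h : i.val + 1 < k then
    (pendantNbrFinset T (v i) ×ˢ pendantNbrFinset T (v ⟨i.val + 1, h⟩)).image Sym2.mk.uncurry
  else ∅

theorem mem_crossEdges {i : Fin k} {e : Sym2 V} :
    e ∈ crossEdges T v i ↔ ∃ j : Fin k, i.val + 1 = j.val ∧
      ∃ a ∈ pendantNbrFinset T (v i), ∃ b ∈ pendantNbrFinset T (v j), s(a, b) = e := by
  unfold crossEdges
  split_ifs with h
  · simp only [mem_image, mem_product, Prod.exists, Function.uncurry_apply_pair]
    constructor
    · rintro ⟨a, b, ⟨ha, hb⟩, rfl⟩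
      exact ⟨_, rfl, a, ha, b, hb, rfl⟩
    · rintro ⟨j, hij, a, ha, b, hb, rfl⟩
      obtain rfl : j = ⟨i.val + 1, h⟩ := Fin.ext hij.symm
      exact ⟨a, b, ⟨ha, hb⟩, rfl⟩
  · simp only [notMem_empty, false_iff, not_exists, not_and]
    intro j hij
    omega

theorem MaxMatchable.mk_mem (hT : InClassT T) (hinj : Function.Injective v)
    (hrange : ∀ u, T.degree u ≠ 1 ↔ ∃ i, v i = u)
    (hpath : ∀ i j : Fin k, T.Adj (v i) (v j) ↔ (i.val + 1 = j.val ∨ j.val + 1 = i.val))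
    {a b : V} (h : MaxMatchable T a b) :
    s(a, b) ∈ pendantEdges T ∪ univ.biUnion (crossEdges T v) := by
  obtain ⟨p, M, hp, hM, halt⟩ := h
  rcases isAltEdgeList_edges_cases (fun _ he => hM.exists_degree_eq_one_mem hT hinj hrange he)
    p hp halt with ⟨hab, ha | hb⟩ | ⟨ha, hb, x, y, hax, hxy, hyb⟩
  · exact mem_union_left _ (mem_pendantEdges.mpr ⟨hab, a, Sym2.mem_mk_left a b, ha⟩)
  · exact mem_union_left _ (mem_pendantEdges.mpr ⟨hab, b, Sym2.mem_mk_right a b, hb⟩)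
  · obtain ⟨i, rfl⟩ := (hrange x).mp fun hx => hT.not_adj_of_degree_eq_one ha hx hax
    obtain ⟨j, rfl⟩ := (hrange y).mp fun hy => hT.not_adj_of_degree_eq_one hb hy hyb.symm
    have ha' : a ∈ pendantNbrFinset T (v i) := mem_pendantNbrFinset.mpr ⟨hax.symm, ha⟩
    have hb' : b ∈ pendantNbrFinset T (v j) := mem_pendantNbrFinset.mpr ⟨hyb, hb⟩
    refine mem_union_right _ (mem_biUnion.mpr ?_)
    rcases (hpath i j).mp hxy with hij | hji
    · exact ⟨i, mem_univ _, mem_crossEdges.mpr ⟨j, hij, a, ha', b, hb', rfl⟩⟩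
    · exact ⟨j, mem_univ _, mem_crossEdges.mpr ⟨i, hji, b, hb', a, ha', Sym2.eq_swap⟩⟩

theorem maxMatchable_of_mem_pendantNbrFinset (hT : InClassT T) (hinj : Function.Injective v)
    (hrange : ∀ u, T.degree u ≠ 1 ↔ ∃ i, v i = u) {i : Fin k} {p : V}
    (hp : p ∈ pendantNbrFinset T (v i)) : MaxMatchable T p (v i) := by
  obtain ⟨f, hf, hfp⟩ := exists_isPendantSelection_extending hT hrange {i} (fun _ => p)
    (by simpa using hp)
  have hadj := (mem_pendantNbrFinset.mp hp).1
  refine ⟨.cons hadj.symm .nil, matchingOfSelection v f, by simpa using hadj.ne',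
    hf.isMaxMatching hT hinj hrange, ?_⟩
  show s(p, v i) ∈ matchingOfSelection v f
  exact mem_image.mpr ⟨i, mem_univ _, by rw [hfp i (mem_singleton_self i), Sym2.eq_swap]⟩

/-- The path `a – v i – v j – b` alternates for a selection through `a` and `b`: its middle
edge has no pendant end, so it lies in no maximum matching. -/
theorem maxMatchable_of_mem_pendantNbrFinset_of_succ (hT : InClassT T)
    (hinj : Function.Injective v) (hrange : ∀ u, T.degree u ≠ 1 ↔ ∃ i, v i = u)
    (hpath : ∀ i j : Fin k, T.Adj (v i) (v j) ↔ (i.val + 1 = j.val ∨ j.val + 1 = i.val))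
    {i j : Fin k} (hij : i.val + 1 = j.val) {a b : V} (ha : a ∈ pendantNbrFinset T (v i))
    (hb : b ∈ pendantNbrFinset T (v j)) : MaxMatchable T a b := by
  have hne : i ≠ j := by rintro rfl; omega
  obtain ⟨f, hf, hfg⟩ := exists_isPendantSelection_extending hT hrange {i, j}
    (fun l => if l = i then a else b) (by simp [ha, hb, hne.symm])
  have hfi : f i = a := by simpa using hfg i (by simp)
  have hfj : f j = b := by simpa [hne.symm] using hfg j (by simp)
  have hMmax := hf.isMaxMatching hT hinj hrange
  have hvv : T.Adj (v i) (v j) := (hpath i j).mpr (.inl hij)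
  have hab : a ≠ b := fun h => hne (eq_of_mem_pendantNbrFinset hinj ha (h ▸ hb))
  rw [mem_pendantNbrFinset] at ha hb
  have hav : a ≠ v j := fun h => degree_ne_one_of_spine hrange j (h ▸ ha.2)
  have hbv : b ≠ v i := fun h => degree_ne_one_of_spine hrange i (h ▸ hb.2)
  refine ⟨.cons ha.1.symm (.cons hvv (.cons hb.1 .nil)), matchingOfSelection v f,
    by simp [Walk.cons_isPath_iff, ha.1.ne', hav, hab, hvv.ne, hbv.symm, hb.1.ne], hMmax, ?_⟩
  show s(a, v i) ∈ matchingOfSelection v f ∧ s(v i, v j) ∉ matchingOfSelection v f ∧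
    s(v j, b) ∈ matchingOfSelection v f
  refine ⟨mem_image.mpr ⟨i, mem_univ _, by rw [hfi, Sym2.eq_swap]⟩, fun hmem => ?_,
    mem_image.mpr ⟨j, mem_univ _, by rw [hfj]⟩⟩
  obtain ⟨x, hx, hdeg⟩ := hMmax.exists_degree_eq_one_mem hT hinj hrange hmem
  rcases Sym2.mem_iff.mp hx with rfl | rfl
  exacts [degree_ne_one_of_spine hrange i hdeg, degree_ne_one_of_spine hrange j hdeg]

theorem edgeSet_fromRel_maxMatchable (hT : InClassT T) (hinj : Function.Injective v)
    (hrange : ∀ u, T.degree u ≠ 1 ↔ ∃ i, v i = u)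
    (hpath : ∀ i j : Fin k, T.Adj (v i) (v j) ↔ (i.val + 1 = j.val ∨ j.val + 1 = i.val)) :
    (fromRel (MaxMatchable T)).edgeSet = ↑(pendantEdges T ∪ univ.biUnion (crossEdges T v)) := by
  refine edgeSet_fromRel_eq (fun a b h => h.mk_mem hT hinj hrange hpath) fun e he => ?_
  rcases mem_union.mp (mem_coe.mp he) with he | he
  · obtain ⟨he, x, hx, hdeg⟩ := mem_pendantEdges.mp he
    obtain ⟨y, rfl⟩ := Sym2.mem_iff_exists.mp hx
    obtain ⟨i, rfl⟩ := (hrange y).mp fun hy => hT.not_adj_of_degree_eq_one hdeg hy he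
    have h := maxMatchable_of_mem_pendantNbrFinset hT hinj hrange
      (mem_pendantNbrFinset.mpr ⟨(mem_edgeSet T).mp he |>.symm, hdeg⟩)
    exact ⟨x, v i, h.ne, h, rfl⟩
  · obtain ⟨i, -, he⟩ := mem_biUnion.mp he
    obtain ⟨j, hij, a, ha, b, hb, rfl⟩ := mem_crossEdges.mp he
    have h := maxMatchable_of_mem_pendantNbrFinset_of_succ hT hinj hrange hpath hij ha hb
    exact ⟨a, b, h.ne, h, rfl⟩

theorem card_pendantEdges (hT : InClassT T) : #(pendantEdges T) = #{x | T.degree x = 1} := by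
  rw [pendantEdges, card_biUnion, card_eq_sum_ones]
  · exact sum_congr rfl fun x hx => by rw [card_incidenceFinset_eq_degree, (mem_filter.mp hx).2]
  · intro a ha b hb hab
    exact disjoint_left.mpr fun e hea heb => hT.not_adj_of_degree_eq_one
      (mem_filter.mp ha).2 (mem_filter.mp hb).2
      (T.adj_of_mem_incidenceSet hab (by simpa using hea) (by simpa using heb))

theorem card_crossEdges (hinj : Function.Injective v) (i : Fin k) :
    #(crossEdges T v i) = if h : i.val + 1 < k then
      pendantNbrs T (v i) * pendantNbrs T (v ⟨i.val + 1, h⟩) else 0 := by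
  unfold crossEdges
  split_ifs with h
  · exact Sym2.card_image_product_of_disjoint
      (disjoint_pendantNbrFinset hinj (by simp [Fin.ext_iff]))
  · rfl

theorem disjoint_crossEdges (hinj : Function.Injective v) {i j : Fin k} (hij : i ≠ j) :
    Disjoint (crossEdges T v i) (crossEdges T v j) := by
  refine disjoint_left.mpr fun e hi hj => ?_
  obtain ⟨i', hii', a, ha, b, hb, rfl⟩ := mem_crossEdges.mp hi
  obtain ⟨j', hjj', c, hc, d, hd, he⟩ := mem_crossEdges.mp hj
  rcases Sym2.eq_iff.mp he with ⟨rfl, rfl⟩ | ⟨rfl, rfl⟩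
  · exact hij (eq_of_mem_pendantNbrFinset hinj ha hc)
  · obtain rfl := eq_of_mem_pendantNbrFinset hinj hb hc
    obtain rfl := eq_of_mem_pendantNbrFinset hinj ha hd
    omega

theorem disjoint_pendantEdges_biUnion_crossEdges (hT : InClassT T) :
    Disjoint (pendantEdges T) (univ.biUnion (crossEdges T v)) := by
  refine disjoint_left.mpr fun e hl hc => ?_
  obtain ⟨i, -, hc⟩ := mem_biUnion.mp hc
  obtain ⟨j, -, a, ha, b, hb, rfl⟩ := mem_crossEdges.mp hc
  exact hT.not_adj_of_degree_eq_one (mem_pendantNbrFinset.mp ha).2 (mem_pendantNbrFinset.mp hb).2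
    (mem_pendantEdges.mp hl).1

end Caterpillar

theorem classT_caterpillar_edge_count_general {V : Type*} [Fintype V] [DecidableEq V]
    (T : SimpleGraph V) [DecidableRel T.Adj] (hT : InClassT T)
    (k : ℕ) (v : Fin k → V) (hinj : Function.Injective v)
    (hrange : ∀ u, T.degree u ≠ 1 ↔ ∃ i, v i = u)
    (hpath : ∀ i j : Fin k, T.Adj (v i) (v j) ↔
      (i.val + 1 = j.val ∨ j.val + 1 = i.val)) :
    (SimpleGraph.fromRel (MaxMatchable T)).edgeSet.ncard =
      (Finset.univ.filter fun u => T.degree u = 1).card +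
        ∑ i : Fin k, (if h : i.val + 1 < k then
          pendantNbrs T (v i) * pendantNbrs T (v ⟨i.val + 1, h⟩) else 0) := by
  rw [edgeSet_fromRel_maxMatchable hT hinj hrange hpath, Set.ncard_coe_finset,
    card_union_of_disjoint (disjoint_pendantEdges_biUnion_crossEdges hT),
    card_biUnion fun i _ j _ hij => disjoint_crossEdges hinj hij, card_pendantEdges hT]
  exact congrArg _ (sum_congr rfl fun i _ => card_crossEdges hinj i)

/-- For a caterpillar in 𝕋 (not a star) with n pendant vertices and
non-pendant vertices v₁,…,v_k forming a path, where vᵢ has tᵢ pendant neighbours,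
the number of edges of the group inverse graph is n + t₁t₂ + t₂t₃ + ⋯ + t_{k−1}t_k. -/
theorem classT_caterpillar_edge_count {V : Type*} [Fintype V] [DecidableEq V]
    (T : SimpleGraph V) [DecidableRel T.Adj] (hT : InClassT T) (hstar : ¬ IsStar T)
    (k : ℕ) (v : Fin k → V) (hinj : Function.Injective v)
    (hrange : ∀ u, T.degree u ≠ 1 ↔ ∃ i, v i = u)
    (hpath : ∀ i j : Fin k, T.Adj (v i) (v j) ↔
      (i.val + 1 = j.val ∨ j.val + 1 = i.val)) :
    (SimpleGraph.fromRel (MaxMatchable T)).edgeSet.ncard =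
      (Finset.univ.filter fun u => T.degree u = 1).card +
        ∑ i : Fin k, (if h : i.val + 1 < k then
          pendantNbrs T (v i) * pendantNbrs T (v ⟨i.val + 1, h⟩) else 0) :=
  classT_caterpillar_edge_count_general T hT k v hinj hrange hpath
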